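/- Fix integers n ≥ 2 and N ≥ 1, maps f : ℝ^(2n−1) × ℝ → ℝ and ĉ : ℝ × ℝ^(2n−1) → ℝ, a dataset of triples (y_i⁺, ζ_i, u_i) ∈ ℝ × ℝ^(2n−1) × ℝ, i = 1,…,N, and a class-K∞ function γ such that ‖ζ_i⁺ − Φ(ζ, y_i⁺)‖ ≤ γ(‖ζ_i − ζ‖) for every i and every ζ ∈ ℝ^(2n−1). Let A ⊆ ℝ^(2n−1). Then for every index i ∈ {1,…,N} and every radius r ≥ 0 such that the closed ball B̄(ζ_i⁺, r) is contained in A, the closed ball B̄(ζ_i, γ⁻¹(r)) is contained in R⁻(A); consequently, any union of such balls B̄(ζ_i, γ⁻¹(r_i)) over pairs (i, r_i) with B̄(ζ_i⁺, r_i) ⊆ A is contained in R⁻(A). -/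

import Mathlib

/-- The closed-loop one-step map with reference `yr`:
`Φ(ζ, yr) = (y₂,…,yₙ, f(ζ, ĉ(yr, ζ)), u₂,…,u_{n−1}, ĉ(yr, ζ))` for the augmented
state `ζ = (y₁,…,yₙ,u₁,…,u_{n−1}) ∈ ℝ^(2n−1)` (0-indexed coordinates). -/
noncomputable def Phi (n : ℕ) (f : EuclideanSpace ℝ (Fin (2*n-1)) → ℝ → ℝ)
    (chat : ℝ → EuclideanSpace ℝ (Fin (2*n-1)) → ℝ)
    (ζ : EuclideanSpace ℝ (Fin (2*n-1))) (yr : ℝ) : EuclideanSpace ℝ (Fin (2*n-1)) :=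
  WithLp.toLp 2 fun (k : Fin (2*n-1)) =>
    if (k : ℕ) = n - 1 then f ζ (chat yr ζ)
    else if h : (k : ℕ) = 2*n - 2 then chat yr ζ
    else ζ ⟨(k : ℕ) + 1, by have := k.isLt; omega⟩

/-- For a data triple `(y_i⁺, ζ_i, u_i)`, the shifted successor state
`ζ_i⁺ = (y_{i,2},…,y_{i,n}, y_i⁺, u_{i,2},…,u_{i,n−1}, u_i)`. -/
noncomputable def zplus (n : ℕ) (yp : ℝ) (ζ : EuclideanSpace ℝ (Fin (2*n-1))) (ui : ℝ) :
    EuclideanSpace ℝ (Fin (2*n-1)) :=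
  WithLp.toLp 2 fun (k : Fin (2*n-1)) =>
    if (k : ℕ) = n - 1 then yp
    else if h : (k : ℕ) = 2*n - 2 then ui
    else ζ ⟨(k : ℕ) + 1, by have := k.isLt; omega⟩

/-- Backward reachable set `R⁻(A) = {ζ : ∃ i, Φ(ζ, y_i⁺) ∈ A}`. -/
def Rminus (n N : ℕ) (f : EuclideanSpace ℝ (Fin (2*n-1)) → ℝ → ℝ)
    (chat : ℝ → EuclideanSpace ℝ (Fin (2*n-1)) → ℝ) (yd : Fin N → ℝ)
    (A : Set (EuclideanSpace ℝ (Fin (2*n-1)))) : Set (EuclideanSpace ℝ (Fin (2*n-1))) :=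
  {ζ | ∃ i : Fin N, Phi n f chat ζ (yd i) ∈ A}

/-- `S_δ = {ζ : |ζₙ| ≤ δ}` (the n-th coordinate is index `n-1`, 0-indexed). -/
def Sdelta (n : ℕ) (hn : 1 ≤ n) (δ : ℝ) : Set (EuclideanSpace ℝ (Fin (2*n-1))) :=
  {ζ | |ζ ⟨n - 1, by omega⟩| ≤ δ}

theorem closedBall_subset_preimage_closedBall {X Y : Type*} [PseudoMetricSpace X]
    [PseudoMetricSpace Y] {g : X → Y} {x₀ : X} {y₀ : Y} {γ : ℝ → ℝ}
    (hγ : MonotoneOn γ (Set.Ici 0)) (hg : ∀ x, dist y₀ (g x) ≤ γ (dist x₀ x))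
    {s r : ℝ} (hs : 0 ≤ s) (hsr : γ s ≤ r) :
    Metric.closedBall x₀ s ⊆ g ⁻¹' Metric.closedBall y₀ r := by
  intro x hx
  rw [Metric.mem_closedBall, dist_comm] at hx
  rw [Set.mem_preimage, Metric.mem_closedBall, dist_comm]
  calc dist y₀ (g x) ≤ γ (dist x₀ x) := hg x
    _ ≤ γ s := hγ dist_nonneg hs hx
    _ ≤ r := hsr

theorem preimage_Phi_subset_Rminus {n N : ℕ} (f : EuclideanSpace ℝ (Fin (2*n-1)) → ℝ → ℝ)
    (chat : ℝ → EuclideanSpace ℝ (Fin (2*n-1)) → ℝ) (yd : Fin N → ℝ) (i : Fin N)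
    (A : Set (EuclideanSpace ℝ (Fin (2*n-1)))) :
    (fun ζ => Phi n f chat ζ (yd i)) ⁻¹' A ⊆ Rminus n N f chat yd A :=
  fun _ hζ => ⟨i, hζ⟩

theorem stmt_3_general (n N : ℕ)
    (f : EuclideanSpace ℝ (Fin (2*n-1)) → ℝ → ℝ)
    (chat : ℝ → EuclideanSpace ℝ (Fin (2*n-1)) → ℝ)
    (yd : Fin N → ℝ) (ζd : Fin N → EuclideanSpace ℝ (Fin (2*n-1))) (ud : Fin N → ℝ)
    (γ γinv : ℝ → ℝ)
    (hγ_mono : StrictMonoOn γ (Set.Ici (0:ℝ)))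
    (hγinv_nonneg : ∀ r, 0 ≤ r → 0 ≤ γinv r)
    (hγinv_right : ∀ r, 0 ≤ r → γ (γinv r) = r)
    (hγ_bound : ∀ (i : Fin N) (ζ : EuclideanSpace ℝ (Fin (2*n-1))),
      ‖zplus n (yd i) (ζd i) (ud i) - Phi n f chat ζ (yd i)‖ ≤ γ ‖ζd i - ζ‖)
    (A : Set (EuclideanSpace ℝ (Fin (2*n-1)))) :
    (∀ (i : Fin N) (r : ℝ), 0 ≤ r →
      Metric.closedBall (zplus n (yd i) (ζd i) (ud i)) r ⊆ A →
      Metric.closedBall (ζd i) (γinv r) ⊆ Rminus n N f chat yd A) ∧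
    (∀ S : Set (Fin N × ℝ),
      (∀ p ∈ S, 0 ≤ p.2 ∧
        Metric.closedBall (zplus n (yd p.1) (ζd p.1) (ud p.1)) p.2 ⊆ A) →
      (⋃ p ∈ S, Metric.closedBall (ζd p.1) (γinv p.2)) ⊆ Rminus n N f chat yd A) := by
  have ball_subset : ∀ (i : Fin N) (r : ℝ), 0 ≤ r →
      Metric.closedBall (zplus n (yd i) (ζd i) (ud i)) r ⊆ A →
      Metric.closedBall (ζd i) (γinv r) ⊆ Rminus n N f chat yd A := by
    intro i r hr hA
    have hdist : ∀ ζ, dist (zplus n (yd i) (ζd i) (ud i)) (Phi n f chat ζ (yd i)) ≤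
        γ (dist (ζd i) ζ) := by
      simpa only [dist_eq_norm] using hγ_bound i
    calc Metric.closedBall (ζd i) (γinv r)
        ⊆ (fun ζ => Phi n f chat ζ (yd i)) ⁻¹'
            Metric.closedBall (zplus n (yd i) (ζd i) (ud i)) r :=
          closedBall_subset_preimage_closedBall hγ_mono.monotoneOn hdist
            (hγinv_nonneg r hr) (hγinv_right r hr).le
      _ ⊆ (fun ζ => Phi n f chat ζ (yd i)) ⁻¹' A := Set.preimage_mono hA
      _ ⊆ Rminus n N f chat yd A := preimage_Phi_subset_Rminus f chat yd i A
  exact ⟨ball_subset, fun S hS => Set.iUnion₂_subset fun p hp =>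
    ball_subset p.1 p.2 (hS p hp).1 (hS p hp).2⟩

/-- Lemma 4: each ball `B̄(ζ_i, γ⁻¹(r))` with `B̄(ζ_i⁺, r) ⊆ A` is
contained in the backward reachable set `R⁻(A)`; consequently any union of such balls
is contained in `R⁻(A)`.  Here `γ` is a class-K∞ function with inverse `γinv` on `[0,∞)`. -/
theorem stmt_3 (n N : ℕ) (hn : 2 ≤ n) (hN : 1 ≤ N)
    (f : EuclideanSpace ℝ (Fin (2*n-1)) → ℝ → ℝ)
    (chat : ℝ → EuclideanSpace ℝ (Fin (2*n-1)) → ℝ)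
    (yd : Fin N → ℝ) (ζd : Fin N → EuclideanSpace ℝ (Fin (2*n-1))) (ud : Fin N → ℝ)
    (γ γinv : ℝ → ℝ)
    (hγ_cont : ContinuousOn γ (Set.Ici (0:ℝ)))
    (hγ_mono : StrictMonoOn γ (Set.Ici (0:ℝ)))
    (hγ_zero : γ 0 = 0)
    (hγ_top : Filter.Tendsto γ Filter.atTop Filter.atTop)
    (hγinv_nonneg : ∀ r, 0 ≤ r → 0 ≤ γinv r)
    (hγinv_right : ∀ r, 0 ≤ r → γ (γinv r) = r)
    (hγinv_left : ∀ s, 0 ≤ s → γinv (γ s) = s)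
    (hγ_bound : ∀ (i : Fin N) (ζ : EuclideanSpace ℝ (Fin (2*n-1))),
      ‖zplus n (yd i) (ζd i) (ud i) - Phi n f chat ζ (yd i)‖ ≤ γ ‖ζd i - ζ‖)
    (A : Set (EuclideanSpace ℝ (Fin (2*n-1)))) :
    (∀ (i : Fin N) (r : ℝ), 0 ≤ r →
      Metric.closedBall (zplus n (yd i) (ζd i) (ud i)) r ⊆ A →
      Metric.closedBall (ζd i) (γinv r) ⊆ Rminus n N f chat yd A) ∧
    (∀ S : Set (Fin N × ℝ),
      (∀ p ∈ S, 0 ≤ p.2 ∧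
        Metric.closedBall (zplus n (yd p.1) (ζd p.1) (ud p.1)) p.2 ⊆ A) →
      (⋃ p ∈ S, Metric.closedBall (ζd p.1) (γinv p.2)) ⊆ Rminus n N f chat yd A) :=
  stmt_3_general n N f chat yd ζd ud γ γinv hγ_mono hγinv_nonneg hγinv_right hγ_bound A
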